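/- For every continuous function f : X → ℂ one has S* ∘ M_f ∘ S = M_{L(f)} as bounded operators on ℓ²(X), where L(f) = ℒ(1)⁻¹·ℒ(f) is the transfer operator. -/

import Mathlib

open Classical

noncomputable section

/-- `ℓ²(X)`: the Hilbert space of square-summable complex families indexed by `X`. -/
abbrev l2 (X : Type*) : Type _ := lp (fun _ : X => ℂ) 2

/-- The orthonormal basis vector `e_x` of `ℓ²(X)`. -/
def e {X : Type*} (x : X) : l2 X := lp.single 2 x 1

/-- The normalized transfer operator
`L(f)(x) = ℒ(1)(x)⁻¹ · ∑_{y ∈ T⁻¹({x})} f(y)`, where `ℒ(1)(x) = card (T⁻¹({x}))`. -/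
def transferOp {X : Type*} (T : X → X) (f : X → ℂ) (x : X) : ℂ :=
  (Nat.card (T ⁻¹' {x}) : ℂ)⁻¹ * ∑ᶠ y ∈ T ⁻¹' {x}, f y

end

/-! Both sides are bounded, so it suffices to compare `⟪e_z, S* M_f S e_x⟫ = ⟪S e_z, M_f S e_x⟫`
with `⟪e_z, M_{L(f)} e_x⟫`. Since `S e_x` is `ℒ(1)(x)^{-1/2}` times the sum of the basis vectors
over the fiber `T⁻¹{x}`, and fibers over distinct points are disjoint, this inner product vanishes
for `z ≠ x` and equals `ℒ(1)(x)⁻¹ ∑_{T y = x} f y` for `z = x`. The fibers are finite, being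
discrete and closed in the compact space `X`. -/

theorem IsCoveringMap.finite_preimage_singleton {E X : Type*} [TopologicalSpace E]
    [TopologicalSpace X] [CompactSpace E] [T1Space X] {p : E → X} (hp : IsCoveringMap p)
    (x : X) : (p ⁻¹' {x}).Finite :=
  (isClosed_singleton.preimage hp.continuous).isCompact.finite
    (isDiscrete_iff_discreteTopology.mpr (hp x).discreteTopology_fiber)

namespace l2

variable {X : Type*}

theorem e_apply (y z : X) : e y z = if z = y then 1 else 0 := by
  simp [e, lp.single_apply, Pi.single_apply]

theorem inner_e_left (z : X) (u : l2 X) : inner ℂ (e z) u = u z := by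
  simp [e, lp.inner_single_left]

theorem inner_e_e (y z : X) : inner ℂ (e y) (e z) = if y = z then 1 else 0 := by
  rw [inner_e_left, e_apply]

theorem inner_sum_e_sum_smul_e (A B : Finset X) (g : X → ℂ) :
    inner ℂ (∑ y ∈ A, e y) (∑ y ∈ B, g y • e y) = ∑ y ∈ A ∩ B, g y := by
  simp_rw [sum_inner, inner_sum, inner_smul_right, inner_e_e, mul_ite, mul_one, mul_zero,
    Finset.sum_ite_eq, Finset.sum_ite_mem]

theorem ext_inner_e {u v : l2 X} (h : ∀ z, inner ℂ (e z) u = inner ℂ (e z) v) : u = v :=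
  lp.ext <| funext fun z => by simpa only [inner_e_left] using h z

theorem ext_continuousLinearMap {F : Type*} [AddCommMonoid F] [Module ℂ F] [TopologicalSpace F]
    [T2Space F] {A B : l2 X →L[ℂ] F} (h : ∀ x, A (e x) = B (e x)) : A = B :=
  lp.ext_continuousLinearMap ENNReal.ofNat_ne_top fun x =>
    ContinuousLinearMap.ext_ring (by simpa [e] using h x)

end l2

section Transfer

open ContinuousLinearMap l2

variable {X : Type*} {T : X → X}

theorem transferOp_eq_sum (hfin : ∀ x, (T ⁻¹' {x}).Finite) (f : X → ℂ) (x : X) :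
    transferOp T f x = (Nat.card (T ⁻¹' {x}) : ℂ)⁻¹ * ∑ y ∈ (hfin x).toFinset, f y := by
  rw [transferOp, finsum_mem_eq_finite_toFinset_sum _ (hfin x)]

theorem adjoint_comp_mul_comp_apply_e (hfin : ∀ x, (T ⁻¹' {x}).Finite)
    {S Mf : l2 X →L[ℂ] l2 X}
    (hS : ∀ x : X, S (e x) = (((Real.sqrt (Nat.card (T ⁻¹' {x})))⁻¹ : ℝ) : ℂ) •
      ∑ᶠ y ∈ T ⁻¹' {x}, e y)
    {f : X → ℂ} (hMf : ∀ x, Mf (e x) = f x • e x) (x : X) :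
    (adjoint S ∘L Mf ∘L S) (e x) = transferOp T f x • e x := by
  set c : X → ℂ := fun x => (((Real.sqrt (Nat.card (T ⁻¹' {x})))⁻¹ : ℝ) : ℂ) with hc
  have hSe : ∀ x, S (e x) = c x • ∑ y ∈ (hfin x).toFinset, e y := fun x => by
    rw [hS, finsum_mem_eq_finite_toFinset_sum _ (hfin x)]
  have hMfSe : Mf (S (e x)) = c x • ∑ y ∈ (hfin x).toFinset, f y • e y := by
    simp only [hSe, map_smul, map_sum, hMf]
  refine ext_inner_e fun z => ?_
  rw [comp_apply, comp_apply, adjoint_inner_right, hSe, hMfSe, inner_smul_left,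
    inner_smul_right, inner_sum_e_sum_smul_e, inner_smul_right, inner_e_e]
  rcases eq_or_ne z x with rfl | hzx
  · have hcc : starRingEnd ℂ (c z) * c z = (Nat.card (T ⁻¹' {z}) : ℂ)⁻¹ := by
      rw [hc, Complex.conj_ofReal, ← Complex.ofReal_mul, ← mul_inv,
        Real.mul_self_sqrt (Nat.cast_nonneg _)]
      push_cast
      rfl
    rw [Finset.inter_self, ← mul_assoc, hcc, if_pos rfl, mul_one, transferOp_eq_sum hfin]
  · have hdisj : Disjoint (hfin z).toFinset (hfin x).toFinset := by
      simpa using (Set.disjoint_singleton.mpr hzx).preimage T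
    rw [Finset.disjoint_iff_inter_eq_empty.mp hdisj, Finset.sum_empty, mul_zero, mul_zero,
      if_neg hzx, mul_zero]

end Transfer

open ContinuousLinearMap in
theorem adjoint_Mf_S_eq_transfer_general {X : Type*} [TopologicalSpace X] [CompactSpace X]
    [T2Space X] (T : X → X) (hT : IsCoveringMap T)
    (S : l2 X →L[ℂ] l2 X)
    (hS : ∀ x : X, S (e x) = (((Real.sqrt (Nat.card (T ⁻¹' {x})))⁻¹ : ℝ) : ℂ) •
      ∑ᶠ y ∈ T ⁻¹' {x}, e y) :
    ∀ f : C(X, ℂ), ∀ Mf ML : l2 X →L[ℂ] l2 X,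
      (∀ x : X, Mf (e x) = f x • e x) →
      (∀ x : X, ML (e x) = transferOp T f x • e x) →
      (adjoint S) ∘L Mf ∘L S = ML := fun f _ _ hMf hML =>
  l2.ext_continuousLinearMap fun x => by
    rw [adjoint_comp_mul_comp_apply_e hT.finite_preimage_singleton hS hMf, hML]

open ContinuousLinearMap in
/-- Let `X` be a compact Hausdorff space, `T : X → X` a covering map, and
`S` the bounded operator on `ℓ²(X)` with `S e_x = (ℒ(1)(x))^{-1/2} ∑_{y ∈ T⁻¹({x})} e_y`.
For every continuous `f : X → ℂ` one has `S* ∘ M_f ∘ S = M_{L(f)}`, where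
`L(f) = ℒ(1)⁻¹·ℒ(f)` is the transfer operator and `M_g` denotes the (unique) bounded
operator with `M_g e_x = g(x) e_x`. -/
theorem adjoint_Mf_S_eq_transfer {X : Type*} [TopologicalSpace X] [CompactSpace X]
    [T2Space X] (T : X → X) (hT : IsCoveringMap T) (hTsurj : Function.Surjective T)
    (S : l2 X →L[ℂ] l2 X)
    (hS : ∀ x : X, S (e x) = (((Real.sqrt (Nat.card (T ⁻¹' {x})))⁻¹ : ℝ) : ℂ) •
      ∑ᶠ y ∈ T ⁻¹' {x}, e y) :
    ∀ f : C(X, ℂ), ∀ Mf ML : l2 X →L[ℂ] l2 X,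
      (∀ x : X, Mf (e x) = f x • e x) →
      (∀ x : X, ML (e x) = transferOp T f x • e x) →
      (adjoint S) ∘L Mf ∘L S = ML :=
  adjoint_Mf_S_eq_transfer_general T hT S hS
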